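/- arXiv:1906.00301 — 2 statements merged into one kernel-verified Lean document; each statement's English description precedes it below -/
import Mathlib

section
/- Let $(A,\mathfrak m_A) \to (B,\mathfrak m_B)$ be a local homomorphism of Noetherian local rings with residue field $F$ of $A$, let $M$ be a nonzero finitely generated $A$-module, and let $N$ be a nonzero finitely generated $B$-module flat over $A$. Then $N \otimes_A M$ has depth zero as a $B$-module if and only if $N \otimes_A F$ has depth zero as a $B$-module and $M$ has depth zero as an $A$-module. -/
/-!
Over a Noetherian local ring, depth zero means that the maximal ideal is an associated prime,
i.e. that some nonzero element is killed by the maximal ideal.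

Let `K = {m ∈ M | 𝔪_A • m = 0}` be the socle of `M`. If `a₁, …, aₛ` generate `𝔪_A`, then `K`
is the kernel of `M → Mˢ, m ↦ (aᵢ • m)ᵢ`, so by flatness `N ⊗ K` is the `𝔪_A`-torsion of
`N ⊗ M`; in particular every element of `N ⊗ M` killed by `𝔪_B` comes from `N ⊗ K`. As
`K ≅ Fᵈ`, we have `N ⊗ K ≅ (N ⊗ F)ᵈ`, so a nonzero element of `N ⊗ K` killed by `𝔪_B` forces
both `K ≠ 0` and such an element in `N ⊗ F`. Conversely, `𝔪_A ∈ Ass M` gives `F ↪ M`, hence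
`N ⊗ F ↪ N ⊗ M`. By Nakayama over `B`, `N` is faithfully flat over `A`, which keeps the tensor
products nonzero.
-/

open TensorProduct IsLocalRing

/-- The depth of a module over a Noetherian local ring: the supremum of the lengths of
regular sequences on `M` contained in the maximal ideal. -/
noncomputable def moduleDepth (A : Type*) [CommRing A] [IsLocalRing A]
    (M : Type*) [AddCommGroup M] [Module A M] : WithTop ℕ :=
  sSup {n : WithTop ℕ | ∃ rs : List A, (∀ r ∈ rs, r ∈ maximalIdeal A) ∧
    RingTheory.Sequence.IsRegular M rs ∧ (rs.length : WithTop ℕ) = n}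

open RingTheory.Sequence Submodule

section LocalRing

variable {R : Type*} [CommRing R] [IsLocalRing R] {M : Type*} [AddCommGroup M] [Module R M]

theorem moduleDepth_eq_zero_iff_forall_not_isSMulRegular [Module.Finite R M] [Nontrivial M] :
    moduleDepth R M = 0 ↔ ∀ r ∈ maximalIdeal R, ¬IsSMulRegular M r := by
  refine ⟨fun h r hr hreg => ?_, fun h => nonpos_iff_eq_zero.mp (sSup_le ?_)⟩
  · have hmem : ∀ s ∈ [r], s ∈ maximalIdeal R := by simpa using hr
    have hone : (1 : WithTop ℕ) ≤ moduleDepth R M :=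
      le_sSup ⟨[r], hmem, .of_isWeaklyRegular_of_mem_maximalIdeal M hmem
        (.cons hreg (.nil R _)), rfl⟩
    simp [h] at hone
  · rintro _ ⟨_ | ⟨r, rs⟩, hmem, hreg, rfl⟩
    · simp
    · exact absurd ((isRegular_cons_iff M r rs).mp hreg).1 (h r (hmem r List.mem_cons_self))

variable [IsNoetherianRing R]

theorem maximalIdeal_mem_associatedPrimes_iff_exists :
    maximalIdeal R ∈ associatedPrimes R M ↔
      ∃ x : M, x ≠ 0 ∧ ∀ r ∈ maximalIdeal R, r • x = 0 := by
  rw [AssociatedPrimes.mem_iff, isAssociatedPrime_iff]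
  refine ⟨fun ⟨hm, x, hx⟩ => ⟨x, ?_, fun r hr => ?_⟩, fun ⟨x, hx0, hx⟩ => ⟨inferInstance, x, ?_⟩⟩
  · rintro rfl
    exact hm.ne_top (by ext; simp [hx, mem_colon_singleton])
  · simpa [hx, mem_colon_singleton] using hr
  · refine (maximalIdeal.isMaximal R).eq_of_le (fun h => hx0 ?_) fun r hr => ?_
    · simpa using (Ideal.eq_top_iff_one _).mp h
    · simpa [mem_colon_singleton] using hx r hr

theorem maximalIdeal_mem_associatedPrimes_of_nontrivial_torsionBySet
    [Nontrivial (torsionBySet R M (maximalIdeal R))] :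
    maximalIdeal R ∈ associatedPrimes R M := by
  obtain ⟨⟨x, hx⟩, hx0⟩ := exists_ne (0 : torsionBySet R M (maximalIdeal R))
  exact maximalIdeal_mem_associatedPrimes_iff_exists.mpr
    ⟨x, by simpa using hx0, fun r hr => (mem_torsionBySet_iff _ x).mp hx ⟨r, hr⟩⟩

theorem maximalIdeal_mem_associatedPrimes_iff_forall_not_isSMulRegular [Module.Finite R M] :
    maximalIdeal R ∈ associatedPrimes R M ↔ ∀ r ∈ maximalIdeal R, ¬IsSMulRegular M r := by
  have hzd : ∀ r, ¬IsSMulRegular M r ↔ r ∈ ⋃ p ∈ associatedPrimes R M, (p : Set R) := by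
    simp [biUnion_associatedPrimes_eq_compl_regular R M]
  simp_rw [hzd]
  refine ⟨fun hm r hr => Set.mem_biUnion hm hr, fun hm => ?_⟩
  obtain ⟨p, hp, hle⟩ := (Ideal.subset_union_prime_finite (associatedPrimes.finite R M) (f := id)
    0 0 fun p hp _ _ => hp.isPrime).mp hm
  rwa [le_antisymm (le_maximalIdeal hp.isPrime.ne_top) hle] at hp

theorem moduleDepth_eq_zero_iff_maximalIdeal_mem_associatedPrimes [Module.Finite R M]
    [Nontrivial M] : moduleDepth R M = 0 ↔ maximalIdeal R ∈ associatedPrimes R M :=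
  moduleDepth_eq_zero_iff_forall_not_isSMulRegular.trans
    maximalIdeal_mem_associatedPrimes_iff_forall_not_isSMulRegular.symm

end LocalRing

theorem associatedPrimes_pi_fin_subset (R X : Type*) [CommRing R] [AddCommGroup X] [Module R X] :
    ∀ d : ℕ, associatedPrimes R (Fin d → X) ⊆ associatedPrimes R X
  | 0 => by simp [associatedPrimes.eq_empty_of_subsingleton]
  | d + 1 => by
    rw [← LinearEquiv.AssociatedPrimes.eq (Fin.consLinearEquiv R fun _ => X),
      associatedPrimes.prod]
    exact Set.union_subset subset_rfl (associatedPrimes_pi_fin_subset R X d)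

theorem exists_linearEquiv_torsionBySet_fin_pi_quotient {A M : Type*} [CommRing A]
    [IsNoetherianRing A] [AddCommGroup M] [Module A M] [Module.Finite A M] (I : Ideal A)
    [I.IsMaximal] : ∃ d : ℕ, Nonempty (torsionBySet A M I ≃ₗ[A] (Fin d → A ⧸ I)) := by
  let := Ideal.Quotient.field I
  have : Module.Finite (A ⧸ I) (torsionBySet A M I) := .of_restrictScalars_finite A _ _
  exact ⟨_, ⟨(Module.finBasis (A ⧸ I) _).equivFun.restrictScalars A⟩⟩

section Tensor

variable {A B : Type*} [CommRing A] [CommRing B] [Algebra A B]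
  (N : Type*) [AddCommGroup N] [Module A N] [Module B N] [IsScalarTower A B N]
  {M : Type*} [AddCommGroup M] [Module A M]

theorem Module.Finite.tensorProduct_of_isScalarTower [Module.Finite B N] [Module.Finite A M] :
    Module.Finite B (N ⊗[A] M) :=
  .equiv (AlgebraTensorModule.cancelBaseChange A B B N M)

theorem associatedPrimes_tensorProduct_subset_of_injective [Module.Flat A N] {P : Type*}
    [AddCommGroup P] [Module A P] {f : P →ₗ[A] M} (hf : Function.Injective f) :
    associatedPrimes B (N ⊗[A] P) ⊆ associatedPrimes B (N ⊗[A] M) :=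
  associatedPrimes.subset_of_injective (f := AlgebraTensorModule.lTensor B N f) <| by
    rw [AlgebraTensorModule.coe_lTensor]
    exact Module.Flat.lTensor_preserves_injective_linearMap f hf

theorem associatedPrimes_tensorProduct_torsionBySet_subset [IsNoetherianRing A]
    [Module.Finite A M] (I : Ideal A) [I.IsMaximal] :
    associatedPrimes B (N ⊗[A] torsionBySet A M I) ⊆ associatedPrimes B (N ⊗[A] (A ⧸ I)) := by
  obtain ⟨d, ⟨e⟩⟩ := exists_linearEquiv_torsionBySet_fin_pi_quotient (M := M) I
  rw [LinearEquiv.AssociatedPrimes.eq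
    (AlgebraTensorModule.congr (LinearEquiv.refl B N) e ≪≫ₗ piRight A B N _)]
  exact associatedPrimes_pi_fin_subset B _ d

theorem Module.Flat.mem_range_lTensor_torsionBySet_subtype [Module.Flat A N] {I : Ideal A}
    (hI : I.FG) {x : N ⊗[A] M} (hx : ∀ a ∈ I, a • x = 0) :
    x ∈ LinearMap.range ((torsionBySet A M I).subtype.lTensor N) := by
  classical
  obtain ⟨s, rfl⟩ := hI
  let φ : M →ₗ[A] (s → M) := LinearMap.pi fun a => LinearMap.lsmul A M a
  have hexact : Function.Exact (torsionBySet A M (Ideal.span (s : Set A))).subtype φ := by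
    rw [LinearMap.exact_iff, range_subtype, ← torsionBySet_eq_torsionBySet_span]
    ext m
    simp [φ, mem_torsionBySet_iff, funext_iff]
  refine (Module.Flat.lTensor_exact N hexact x).mp ((piRight A A N fun _ : s => M).injective ?_)
  ext a : 1
  have hcomp : LinearMap.proj a ∘ₗ (piRight A A N fun _ : s => M).toLinearMap ∘ₗ φ.lTensor N
      = (a : A) • LinearMap.id := by
    ext n m
    simp [φ]
  simpa [hx a (Ideal.subset_span a.2)] using LinearMap.congr_fun hcomp x

end Tensor

section LocalHom

variable {A B : Type*} [CommRing A] [CommRing B] [IsLocalRing A] [IsLocalRing B] [Algebra A B]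
  [IsLocalHom (algebraMap A B)]
  (N : Type*) [AddCommGroup N] [Module A N] [Module B N] [IsScalarTower A B N]

theorem Module.FaithfullyFlat.of_flat_of_finite_of_isLocalHom [Module.Flat A N]
    [Module.Finite B N] [Nontrivial N] : Module.FaithfullyFlat A N where
  submodule_ne_top m hm htop := by
    rw [eq_maximalIdeal hm] at htop
    refine (top_ne_ideal_smul_of_le_jacobson_annihilator
      (maximalIdeal_le_jacobson (Module.annihilator B N))).symm (eq_top_iff.mpr fun n _ => ?_)
    refine smul_induction_on (htop.ge (mem_top (x := n))) (fun a ha n _ => ?_)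
      fun _ _ => add_mem
    rw [← algebraMap_smul B a n]
    exact smul_mem_smul ((maximalIdeal_comap (algebraMap A B)).ge ha) trivial

theorem maximalIdeal_mem_associatedPrimes_tensorProduct_torsionBySet [IsNoetherianRing A]
    [IsNoetherianRing B] [Module.Flat A N] {M : Type*} [AddCommGroup M] [Module A M]
    (h : maximalIdeal B ∈ associatedPrimes B (N ⊗[A] M)) :
    maximalIdeal B ∈ associatedPrimes B (N ⊗[A] torsionBySet A M (maximalIdeal A)) := by
  rw [maximalIdeal_mem_associatedPrimes_iff_exists] at h ⊢
  obtain ⟨x, hx0, hx⟩ := h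
  let ι := AlgebraTensorModule.lTensor B N (torsionBySet A M (maximalIdeal A)).subtype
  have hι : Function.Injective ι := by
    rw [AlgebraTensorModule.coe_lTensor]
    exact Module.Flat.lTensor_preserves_injective_linearMap _ (injective_subtype _)
  obtain ⟨y, rfl⟩ : x ∈ LinearMap.range ι := by
    refine Module.Flat.mem_range_lTensor_torsionBySet_subtype N (IsNoetherian.noetherian _)
      fun a ha => ?_
    rw [← algebraMap_smul B a x]
    exact hx _ ((maximalIdeal_comap (algebraMap A B)).ge ha)
  refine ⟨y, fun hy => hx0 (by rw [hy, map_zero]), fun r hr => hι ?_⟩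
  rw [map_smul, hx r hr, map_zero]

end LocalHom

/-- Let `A → B` be a local homomorphism of Noetherian local rings, `F` the residue field
of `A`, `M` a nonzero finitely generated `A`-module and `N` a nonzero finitely generated
`B`-module flat over `A`.  Then `N ⊗[A] M` has depth zero (over `B`) iff `N ⊗[A] F` has
depth zero (over `B`) and `M` has depth zero (over `A`). -/
theorem depth_tensor_eq_zero_iff
    {A B : Type*} [CommRing A] [CommRing B] [IsNoetherianRing A] [IsNoetherianRing B]
    [IsLocalRing A] [IsLocalRing B] [Algebra A B] [IsLocalHom (algebraMap A B)]
    (M : Type*) [AddCommGroup M] [Module A M] [Module.Finite A M] [Nontrivial M]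
    (N : Type*) [AddCommGroup N] [Module A N] [Module B N] [IsScalarTower A B N]
    [Module.Finite B N] [Nontrivial N] [Module.Flat A N] :
    moduleDepth B (N ⊗[A] M) = 0 ↔
      moduleDepth B (N ⊗[A] ResidueField A) = 0 ∧ moduleDepth A M = 0 := by
  have := Module.FaithfullyFlat.of_flat_of_finite_of_isLocalHom (A := A) (B := B) N
  have := Module.Finite.tensorProduct_of_isScalarTower (A := A) (B := B) N (M := M)
  have := Module.Finite.tensorProduct_of_isScalarTower (A := A) (B := B) N (M := ResidueField A)
  simp only [moduleDepth_eq_zero_iff_maximalIdeal_mem_associatedPrimes]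
  -- `ResidueField A` unfolds to `A ⧸ maximalIdeal A`, the quotient used by both directions.
  constructor
  · intro h
    have hK := maximalIdeal_mem_associatedPrimes_tensorProduct_torsionBySet N h
    have : Nontrivial (torsionBySet A M (maximalIdeal A)) :=
      not_subsingleton_iff_nontrivial.mp fun _ => not_isAssociatedPrime_of_subsingleton hK
    exact ⟨associatedPrimes_tensorProduct_torsionBySet_subset N _ hK,
      maximalIdeal_mem_associatedPrimes_of_nontrivial_torsionBySet⟩
  · rintro ⟨hF, hM⟩
    obtain ⟨-, f, hf⟩ := (isAssociatedPrime_iff_exists_injective_linearMap _ _).mp hM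
    exact associatedPrimes_tensorProduct_subset_of_injective N hf hF
end

section
/- Let $A \to B$ be a flat homomorphism of Noetherian rings and let $M$ be a finitely generated $A$-module. Then the set of associated primes of the $B$-module $M \otimes_A B$ equals the union, over all associated primes $\mathfrak p$ of $M$, of the sets of associated primes of the $B$-module $B/\mathfrak p B$. -/
/-!
Let `P` be an associated prime of `B ⊗[A] M` and `p = P ∩ A`. Filtering `M` by submodules with
subquotients `A ⧸ q` and tensoring with the flat algebra `B`, `P` is an associated prime of some
`B ⊗[A] (A ⧸ q) ≅ B ⧸ qB`; as `A ∖ q` acts by nonzerodivisors there, `q = p`.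
For `p ∈ Ass M`, let `N ⊆ M` be the submodule killed by `p`: flat base change preserves this
kernel, so the element of `B ⊗[A] M` with annihilator `P` comes from `B ⊗[A] N`, no element of
`A ∖ p` kills `N`, and `p = Ann N` is an associated prime of `N`.
-/

open TensorProduct

section BaseChange

variable {A B : Type*} [CommRing A] [CommRing B] [Algebra A B]
  {N₁ N₂ N₃ : Type*} [AddCommGroup N₁] [Module A N₁] [AddCommGroup N₂] [Module A N₂]
  [AddCommGroup N₃] [Module A N₃]

theorem Module.annihilator_le_comap_annihilator_tensorProduct :
    Module.annihilator A N₁ ≤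
      (Module.annihilator B (B ⊗[A] N₁)).comap (algebraMap A B) := by
  intro a ha
  rw [Ideal.mem_comap, Module.mem_annihilator]
  intro z
  induction z using TensorProduct.induction_on with
  | zero => rw [smul_zero]
  | tmul b n => rw [algebraMap_smul, ← tmul_smul, Module.mem_annihilator.mp ha, tmul_zero]
  | add y z hy hz => rw [smul_add, hy, hz, add_zero]

variable [Module.Flat A B]

theorem associatedPrimes_tensorProduct_subset_of_injective_s6 {f : N₁ →ₗ[A] N₂}
    (hf : Function.Injective f) :
    associatedPrimes B (B ⊗[A] N₁) ⊆ associatedPrimes B (B ⊗[A] N₂) :=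
  associatedPrimes.subset_of_injective (f := AlgebraTensorModule.lTensor B B f)
    (Module.Flat.lTensor_preserves_injective_linearMap f hf)

theorem associatedPrimes_tensorProduct_subset_union_of_exact {f : N₁ →ₗ[A] N₂}
    {g : N₂ →ₗ[A] N₃} (hf : Function.Injective f) (hfg : Function.Exact f g) :
    associatedPrimes B (B ⊗[A] N₂) ⊆
      associatedPrimes B (B ⊗[A] N₁) ∪ associatedPrimes B (B ⊗[A] N₃) :=
  associatedPrimes.subset_union_of_exact (f := AlgebraTensorModule.lTensor B B f)
    (g := AlgebraTensorModule.lTensor B B g)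
    (Module.Flat.lTensor_preserves_injective_linearMap f hf) (Module.Flat.lTensor_exact B hfg)

theorem mem_range_lTensor_torsionBySet {I : Ideal A} (hI : I.FG) {x : B ⊗[A] N₁}
    (hx : ∀ a ∈ I, a • x = 0) :
    x ∈ LinearMap.range
      (AlgebraTensorModule.lTensor B B (Submodule.torsionBySet A N₁ I).subtype) := by
  classical
  obtain ⟨s, rfl⟩ := hI
  let ρ : N₁ →ₗ[A] (s → N₁) := LinearMap.pi fun a ↦ (a : A) • LinearMap.id
  have hker :
      LinearMap.ker ρ = Submodule.torsionBySet A N₁ (Ideal.span (s : Set A) : Set A) := by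
    ext n
    rw [← Submodule.torsionBySet_eq_torsionBySet_span]
    simp [ρ, Submodule.mem_torsionBySet_iff, funext_iff]
  have hρ : ∀ z : B ⊗[A] N₁,
      TensorProduct.piRight A B B (fun _ : s ↦ N₁) (AlgebraTensorModule.lTensor B B ρ z) =
        fun a : s ↦ (a : A) • z := by
    intro z
    induction z using TensorProduct.induction_on with
    | zero => ext; simp
    | tmul b n => ext a; simp [ρ]
    | add y z hy hz => rw [map_add, map_add, hy, hz]; ext a; exact (smul_add _ _ _).symm
  rw [← hker, ← Module.Flat.ker_lTensor_eq, LinearMap.mem_ker]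
  apply (TensorProduct.piRight A B B (fun _ : s ↦ N₁)).injective
  rw [hρ, map_zero]
  ext a
  exact hx a (Ideal.subset_span a.2)

theorem comap_eq_of_mem_associatedPrimes_tensorProduct_quotient {q : Ideal A} [q.IsPrime]
    {P : Ideal B} (hP : P ∈ associatedPrimes B (B ⊗[A] (A ⧸ q))) :
    P.comap (algebraMap A B) = q := by
  refine le_antisymm (fun a ha ↦ ?_) ?_
  · by_contra haq
    have hreg : IsSMulRegular (B ⊗[A] (A ⧸ q)) (algebraMap A B a) := by
      refine .of_flat_of_isBaseChange (TensorProduct.isBaseChange A (A ⧸ q) B) ?_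
      rw [← isSMulRegular_algebraMap_iff (A := A ⧸ q)]
      exact .of_ne_zero (by rwa [Ne, Ideal.Quotient.algebraMap_eq, Ideal.Quotient.eq_zero_iff_mem])
    obtain ⟨hPprime, x, rfl⟩ := hP
    obtain ⟨n, hn⟩ := ha
    rw [Submodule.mem_colon_singleton, Submodule.mem_bot] at hn
    rw [(hreg.pow n).right_eq_zero_of_smul hn, Submodule.colon_singleton_zero,
      Ideal.radical_top] at hPprime
    exact hPprime.ne_top rfl
  · calc q = Module.annihilator A (A ⧸ q) := Ideal.annihilator_quotient.symm
      _ ≤ _ := Module.annihilator_le_comap_annihilator_tensorProduct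
      _ ≤ P.comap (algebraMap A B) := by
        rw [← Submodule.annihilator_top (R := B) (M := B ⊗[A] (A ⧸ q))]
        exact Ideal.comap_mono hP.annihilator_le

variable {M : Type*} [AddCommGroup M] [Module A M]

theorem mem_associatedPrimes_tensorProduct_quotient_comap [IsNoetherianRing A]
    [Module.Finite A M] {P : Ideal B} (hP : P ∈ associatedPrimes B (B ⊗[A] M)) :
    P ∈ associatedPrimes B (B ⊗[A] (A ⧸ P.comap (algebraMap A B))) := by
  revert P
  induction ‹Module.Finite A M› using
    IsNoetherianRing.induction_on_isQuotientEquivQuotientPrime A with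
  | subsingleton N =>
    intro P hP
    exact absurd hP not_isAssociatedPrime_of_subsingleton
  | quotient N q e =>
    intro P hP
    rw [LinearEquiv.AssociatedPrimes.eq (e.baseChange A B N (A ⧸ q.1))] at hP
    rwa [comap_eq_of_mem_associatedPrimes_tensorProduct_quotient hP]
  | exact N₁ N₂ N₃ f g hf _ hfg h₁ h₃ =>
    intro P hP
    exact (associatedPrimes_tensorProduct_subset_union_of_exact hf hfg hP).elim (h₁ ·) (h₃ ·)

theorem comap_mem_associatedPrimes_of_mem_associatedPrimes_tensorProduct [IsNoetherianRing A]
    [IsNoetherianRing B] [Module.Finite A M] {P : Ideal B}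
    (hP : P ∈ associatedPrimes B (B ⊗[A] M)) :
    P.comap (algebraMap A B) ∈ associatedPrimes A M := by
  obtain ⟨hPprime, x, rfl⟩ := isAssociatedPrime_iff.mp hP
  set p := (Submodule.colon ⊥ {x}).comap (algebraMap A B)
  have hpx : ∀ a ∈ p, a • x = 0 := fun a ha ↦ by
    rwa [Ideal.mem_comap, Submodule.mem_colon_singleton, Submodule.mem_bot, algebraMap_smul] at ha
  let N := Submodule.torsionBySet A M p
  obtain ⟨y, hy⟩ := mem_range_lTensor_torsionBySet (IsNoetherian.noetherian p) hpx
  have hann : Module.annihilator A N = p := by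
    refine le_antisymm (fun c hc ↦ ?_) ?_
    · have hcy := Module.mem_annihilator.mp (Ideal.mem_comap.mp
        (Module.annihilator_le_comap_annihilator_tensorProduct (B := B) hc)) y
      rw [Ideal.mem_comap, Submodule.mem_colon_singleton, Submodule.mem_bot, ← hy, ← map_smul,
        hcy, map_zero]
    · exact (Module.isTorsionBySet_iff_subset_annihilator _ _).mp
        (Submodule.torsionBySet_isTorsionBySet (M := M) _)
  have : p.IsPrime := hPprime.comap _
  have hpN : p ∈ associatedPrimes A N :=
    Module.associatedPrimes.minimalPrimes_annihilator_subset_associatedPrimes A N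
      (by rw [hann, Ideal.minimalPrimes_eq_subsingleton_self]; rfl)
  exact associatedPrimes.subset_of_injective N.injective_subtype hpN

end BaseChange

/-- Let `A → B` be a flat homomorphism of Noetherian rings and `M` a finitely generated
`A`-module.  Then the associated primes of the `B`-module `B ⊗[A] M` are exactly the
union, over the associated primes `𝔭` of `M`, of the associated primes of `B ⧸ 𝔭B`. -/
theorem associatedPrimes_baseChange
    {A B : Type*} [CommRing A] [CommRing B] [IsNoetherianRing A] [IsNoetherianRing B]
    [Algebra A B] [Module.Flat A B]
    (M : Type*) [AddCommGroup M] [Module A M] [Module.Finite A M] :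
    associatedPrimes B (B ⊗[A] M) =
      ⋃ p ∈ associatedPrimes A M,
        associatedPrimes B (B ⧸ Ideal.map (algebraMap A B) p) := by
  have hquot (p : Ideal A) : associatedPrimes B (B ⧸ p.map (algebraMap A B)) =
      associatedPrimes B (B ⊗[A] (A ⧸ p)) :=
    LinearEquiv.AssociatedPrimes.eq
      (Algebra.TensorProduct.quotIdealMapEquivTensorQuot B p).toLinearEquiv
  ext P
  rw [Set.mem_iUnion₂]
  constructor
  · intro hP
    refine ⟨_, comap_mem_associatedPrimes_of_mem_associatedPrimes_tensorProduct hP, ?_⟩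
    rw [hquot]
    exact mem_associatedPrimes_tensorProduct_quotient_comap hP
  · rintro ⟨p, hp, hP⟩
    obtain ⟨-, f, hf⟩ := (isAssociatedPrime_iff_exists_injective_linearMap p M).mp hp
    rw [hquot] at hP
    exact associatedPrimes_tensorProduct_subset_of_injective_s6 hf hP
end
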